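/- Fix ε > 0, q ∈ ℝ_{≥0}^D, finite non-negative Borel measures ν, ξ on [0,1], and p ∈ ℝ_{≥0}^D with q − p ∈ ℝ_{≥0}^D. Let X_n^{ε,q,ν} = log Σ_{π: 0→⌊nq⌋} exp(−(1/ε)ρ(μ_π, nν)). Then X_n^{ε,p,ξ} − (1/ε)(n‖q−p‖₁ + n‖ν−ξ‖_TV + D) ≤ X_n^{ε,p,ξ} − (1/ε)(‖⌊nq⌋−⌊np⌋‖₁ + n·ρ(ν,ξ)) ≤ X_n^{ε,q,ν}. -/

import Mathlib

open MeasureTheory Finset Filter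
open scoped Classical ENNReal unitInterval

noncomputable section

/-- A north-east path in `ℤ^D` is encoded by its starting point and its step sequence:
a path of length `L` is `w : Fin L → Fin D`, where step `j` adds the standard basis
vector `e_{w j}`. `pathsFS L p q` is the finset of step sequences of NE paths `p → q`
(empty unless `q - p` has non-negative coordinates summing to `L`). -/
def pathsFS (L : ℕ) {D : ℕ} (p q : Fin D → ℤ) : Finset (Fin L → Fin D) :=
  Finset.univ.filter fun w =>
    ∀ i, p i + ((Finset.univ.filter fun j => w j = i).card : ℤ) = q i

/-- The vertex reached from `p` after the first `j` steps of the step sequence `w`. -/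
def vertexAt {D : ℕ} (p : Fin D → ℤ) {L : ℕ} (w : Fin L → Fin D) (j : ℕ) (i : Fin D) : ℤ :=
  p i + ((Finset.univ.filter fun l : Fin L => (l : ℕ) < j ∧ w l = i).card : ℤ)

/-- The (unnormalized) empirical measure `μ_π = Σ_{e ∈ π} δ_{U_e}` of the edge labels along
the NE path from `p` with step sequence `w`; the label of edge `j` (anchored at the vertex
after `j` steps, in direction `w j`) is given by the labelling `ω`. -/
def pathMeasure {D : ℕ} (ω : ((Fin D → ℤ) × Fin D) → I)
    (p : Fin D → ℤ) {L : ℕ} (w : Fin L → Fin D) : Measure I :=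
  ∑ j : Fin L, Measure.dirac (ω (vertexAt p w j, w j))

/-- Coordinatewise floor `⌊nq⌋` of the scaled direction `nq`. -/
def fl {D : ℕ} (n : ℕ) (q : Fin D → ℝ) (i : Fin D) : ℤ := ⌊(n : ℝ) * q i⌋

end

noncomputable section

/-- `X_n^{ε,q,ν} = log Σ_{π : 0 → ⌊nq⌋} exp(−(1/ε)·ρ(μ_π, nν))`. -/
def Xn {D : ℕ} (ω : ((Fin D → ℤ) × Fin D) → I) (ε : ℝ) (n : ℕ)
    (q : Fin D → ℝ) (ν : Measure I) : ℝ :=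
  Real.log (∑ w ∈ pathsFS (∑ i, (fl n q i).toNat) (0 : Fin D → ℤ) (fl n q),
    Real.exp (-(1/ε) * levyProkhorovDist (pathMeasure ω 0 w) (n • ν)))

/-- The total variation norm `‖ν − ξ‖_TV = sup_{A Borel} |ν(A) − ξ(A)|`. -/
def tvDist {X : Type*} [MeasurableSpace X] (μ ν : Measure X) : ℝ :=
  ⨆ A : {s : Set X // MeasurableSet s}, |(μ A.1).toReal - (ν A.1).toReal|
/-!
Appending one fixed north-east path `⌊np⌋ → ⌊nq⌋` of `‖⌊nq⌋ − ⌊np⌋‖₁` edges to every path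
`0 → ⌊np⌋` is injective, and adds to the empirical measure a measure of total mass
`‖⌊nq⌋ − ⌊np⌋‖₁`, which moves it by at most that much in Lévy–Prokhorov distance; replacing
`nξ` by `nν` costs at most `ρ(nξ, nν) ≤ n ρ(ξ, ν)`. Comparing the two partition functions
term by term gives the second inequality. The first one follows from
`⌊nq_i⌋ − ⌊np_i⌋ ≤ n(q_i − p_i) + 1` and `ρ ≤ ‖·‖_TV`: a set `B` is contained in each of its
thickenings.
-/

section Paths

variable {D : ℕ}

@[simp] lemma mem_pathsFS {L : ℕ} {p q : Fin D → ℤ} {w : Fin L → Fin D} :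
    w ∈ pathsFS L p q ↔ ∀ i, p i + (#{j | w j = i} : ℤ) = q i := by
  simp [pathsFS]

lemma Fin.card_filter_univ_add {m n : ℕ} (P : Fin (m + n) → Prop) [DecidablePred P] :
    #{j | P j} = #{a : Fin m | P (Fin.castAdd n a)} + #{b : Fin n | P (Fin.natAdd m b)} := by
  simp only [card_filter, Fin.sum_univ_add]

@[simp] lemma vertexAt_zero (p : Fin D → ℤ) {L : ℕ} (w : Fin L → Fin D) :
    vertexAt p w 0 = p := by
  funext i
  simp [vertexAt]

lemma vertexAt_of_mem_pathsFS {L : ℕ} {p q : Fin D → ℤ} {w : Fin L → Fin D}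
    (hw : w ∈ pathsFS L p q) {j : ℕ} (hj : L ≤ j) : vertexAt p w j = q := by
  funext i
  rw [← mem_pathsFS.mp hw i, vertexAt]
  congr 3
  ext l
  simp only [mem_filter, mem_univ, true_and, and_iff_right_iff_imp]
  exact fun _ => l.isLt.trans_le hj

lemma vertexAt_append (p : Fin D → ℤ) {L L' : ℕ} (w : Fin L → Fin D) (w' : Fin L' → Fin D)
    (j : ℕ) : vertexAt p (Fin.append w w') j = vertexAt (vertexAt p w j) w' (j - L) := by
  funext i
  have hshift : ∀ b : Fin L', L + (b : ℕ) < j ↔ (b : ℕ) < j - L := fun b => by omega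
  simp only [vertexAt, Fin.card_filter_univ_add, Fin.append_left, Fin.append_right,
    Fin.val_castAdd, Fin.val_natAdd, hshift]
  push_cast
  ring

lemma append_mem_pathsFS {L L' : ℕ} {p q r : Fin D → ℤ} {w : Fin L → Fin D}
    {w' : Fin L' → Fin D} (hw : w ∈ pathsFS L p q) (hw' : w' ∈ pathsFS L' q r) :
    Fin.append w w' ∈ pathsFS (L + L') p r := by
  simp only [mem_pathsFS, Fin.card_filter_univ_add, Fin.append_left, Fin.append_right] at *
  intro i
  push_cast
  linarith [hw i, hw' i]

lemma step_mem_pathsFS (q : Fin D → ℤ) (i₀ : Fin D) :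
    (fun _ : Fin 1 => i₀) ∈ pathsFS 1 (Function.update q i₀ (q i₀ - 1)) q := by
  rw [mem_pathsFS]
  intro i
  by_cases hi : i = i₀
  · subst hi; simp
  · simp [Function.update_of_ne hi, Ne.symm hi]

lemma pathsFS_nonempty {p q : Fin D → ℤ} (hpq : p ≤ q) {L : ℕ}
    (hL : ∑ i, (q i - p i).toNat = L) : (pathsFS L p q).Nonempty := by
  induction L generalizing q with
  | zero =>
    have hq : q = p := funext fun i => by
      have h0 := sum_eq_zero_iff.mp hL i (mem_univ i)
      have hi : p i ≤ q i := hpq i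
      omega
    subst hq
    exact ⟨Fin.elim0, by simp⟩
  | succ L ih =>
    obtain ⟨i₀, hi₀⟩ : ∃ i₀, p i₀ < q i₀ := by
      by_contra! h
      simp [fun i => Int.toNat_of_nonpos (sub_nonpos.mpr (h i))] at hL
    set q' := Function.update q i₀ (q i₀ - 1)
    have hpq' : p ≤ q' := fun i => by
      by_cases hi : i = i₀
      · subst hi; simp only [q', Function.update_self]; omega
      · simp only [q', Function.update_of_ne hi]; exact hpq i
    have hcount : ∀ i, (q i - p i).toNat = (q' i - p i).toNat + if i = i₀ then 1 else 0 :=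
      fun i => by
        by_cases hi : i = i₀
        · subst hi; simp only [q', Function.update_self, if_true]; omega
        · simp [q', hi]
    have hL' : ∑ i, (q' i - p i).toNat = L := by
      simp only [hcount, sum_add_distrib, sum_ite_eq', mem_univ, if_true] at hL
      omega
    obtain ⟨w, hw⟩ := ih hpq' hL'
    exact ⟨_, append_mem_pathsFS hw (step_mem_pathsFS q i₀)⟩

instance (ω : ((Fin D → ℤ) × Fin D) → I) (p : Fin D → ℤ) {L : ℕ} (w : Fin L → Fin D) :
    IsFiniteMeasure (pathMeasure ω p w) :=
  inferInstanceAs (IsFiniteMeasure (∑ _, _))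

lemma pathMeasure_apply_univ (ω : ((Fin D → ℤ) × Fin D) → I) (p : Fin D → ℤ) {L : ℕ}
    (w : Fin L → Fin D) : pathMeasure ω p w Set.univ = L := by
  simp [pathMeasure, Measure.finsetSum_apply]

lemma pathMeasure_append (ω : ((Fin D → ℤ) × Fin D) → I) {L L' : ℕ} {p q : Fin D → ℤ}
    {w : Fin L → Fin D} (hw : w ∈ pathsFS L p q) (w' : Fin L' → Fin D) :
    pathMeasure ω p (Fin.append w w') = pathMeasure ω p w + pathMeasure ω q w' := by
  simp only [pathMeasure, Fin.sum_univ_add, Fin.append_left, Fin.append_right, vertexAt_append,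
    Fin.val_castAdd, Fin.val_natAdd, Nat.sub_eq_zero_of_le (Fin.is_le'), vertexAt_zero,
    Nat.add_sub_cancel_left, vertexAt_of_mem_pathsFS hw (Nat.le_add_right _ _)]

end Paths

section LevyProkhorov

open Metric

variable {Ω : Type*} [MeasurableSpace Ω]

lemma abs_sub_le_tvDist (μ ν : Measure Ω) [IsFiniteMeasure μ] [IsFiniteMeasure ν]
    {B : Set Ω} (hB : MeasurableSet B) : |(μ B).toReal - (ν B).toReal| ≤ tvDist μ ν := by
  refine le_ciSup (f := fun A : {s : Set Ω // MeasurableSet s} =>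
    |(μ A.1).toReal - (ν A.1).toReal|) ⟨μ.real Set.univ + ν.real Set.univ, ?_⟩ ⟨B, hB⟩
  rintro _ ⟨A, rfl⟩
  refine (abs_sub _ _).trans (add_le_add ?_ ?_) <;>
    rw [abs_of_nonneg ENNReal.toReal_nonneg] <;> exact measureReal_mono (Set.subset_univ _)

variable [PseudoEMetricSpace Ω]

lemma levyProkhorovEDist_le_of_forall_measure_le_add {μ ν : Measure Ω} {δ : ℝ≥0∞}
    (h : ∀ B, MeasurableSet B → μ B ≤ ν B + δ ∧ ν B ≤ μ B + δ) :
    levyProkhorovEDist μ ν ≤ δ := by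
  refine levyProkhorovEDist_le_of_forall μ ν δ fun ε B hδε hε hB => ?_
  have hB_sub : B ⊆ thickening ε.toReal B :=
    self_subset_thickening (ENNReal.toReal_pos (pos_of_gt hδε).ne' hε.ne) B
  exact ⟨(h B hB).1.trans (add_le_add (measure_mono hB_sub) hδε.le),
    (h B hB).2.trans (add_le_add (measure_mono hB_sub) hδε.le)⟩

lemma levyProkhorovDist_add_left_le (μ ν : Measure Ω) [IsFiniteMeasure ν] :
    levyProkhorovDist (μ + ν) μ ≤ (ν Set.univ).toReal := by
  refine ENNReal.toReal_mono (measure_ne_top ν _)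
    (levyProkhorovEDist_le_of_forall_measure_le_add fun B _ => ⟨?_, ?_⟩)
  · rw [Measure.add_apply]
    exact add_le_add_right (measure_mono (Set.subset_univ B)) _
  · rw [Measure.add_apply, add_assoc]
    exact le_self_add

lemma levyProkhorovDist_le_tvDist (μ ν : Measure Ω) [IsFiniteMeasure μ] [IsFiniteMeasure ν] :
    levyProkhorovDist μ ν ≤ tvDist μ ν := by
  have htv : 0 ≤ tvDist μ ν := (abs_nonneg _).trans (abs_sub_le_tvDist μ ν MeasurableSet.empty)
  have key : ∀ (α β : Measure Ω) [IsFiniteMeasure α] [IsFiniteMeasure β] (B : Set Ω),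
      (α B).toReal ≤ (β B).toReal + tvDist μ ν → α B ≤ β B + ENNReal.ofReal (tvDist μ ν) :=
    fun α β _ _ B h => (ENNReal.toReal_le_toReal (measure_ne_top α B) (by finiteness)).mp <| by
      rwa [ENNReal.toReal_add (measure_ne_top β B) ENNReal.ofReal_ne_top,
        ENNReal.toReal_ofReal htv]
  refine ENNReal.toReal_le_of_le_ofReal htv
    (levyProkhorovEDist_le_of_forall_measure_le_add fun B hB => ?_)
  have h := abs_sub_le_iff.mp (abs_sub_le_tvDist μ ν hB)
  exact ⟨key μ ν B (by linarith), key ν μ B (by linarith)⟩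

lemma levyProkhorovEDist_nsmul_le (n : ℕ) (μ ν : Measure Ω) :
    levyProkhorovEDist (n • μ) (n • ν) ≤ n * levyProkhorovEDist μ ν := by
  rcases Nat.eq_zero_or_pos n with rfl | hn
  · simp
  have hn0 : (n : ℝ≥0∞) ≠ 0 := by exact_mod_cast hn.ne'
  have hntop : (n : ℝ≥0∞) ≠ ∞ := ENNReal.natCast_ne_top n
  refine levyProkhorovEDist_le_of_forall _ _ _ fun ε B hε hεtop hB => ?_
  have hlt : levyProkhorovEDist μ ν < ε / n := by
    rwa [ENNReal.lt_div_iff_mul_lt (Or.inl hn0) (Or.inl hntop), mul_comm]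
  have hthick : (ε / n).toReal ≤ ε.toReal :=
    ENNReal.toReal_mono hεtop.ne
      (ENNReal.div_le_of_le_mul (le_mul_of_one_le_right zero_le (by exact_mod_cast hn)))
  have scale : ∀ α β : Measure Ω, α B ≤ β (thickening (ε / n).toReal B) + ε / n →
      (n • α) B ≤ (n • β) (thickening ε.toReal B) + ε := fun α β h => by
    rw [Measure.smul_apply, Measure.smul_apply, nsmul_eq_mul, nsmul_eq_mul]
    calc (n : ℝ≥0∞) * α B ≤ n * (β (thickening ε.toReal B) + ε / n) :=
          mul_le_mul_right (h.trans (add_le_add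
            (measure_mono (thickening_mono hthick B)) le_rfl)) _
      _ = n * β (thickening ε.toReal B) + ε := by
          rw [mul_add, ENNReal.mul_div_cancel hn0 hntop]
  exact ⟨scale μ ν (left_measure_le_of_levyProkhorovEDist_lt hlt hB),
    scale ν μ (right_measure_le_of_levyProkhorovEDist_lt hlt hB)⟩

lemma levyProkhorovDist_nsmul_le (n : ℕ) (μ ν : Measure Ω) [IsFiniteMeasure μ]
    [IsFiniteMeasure ν] : levyProkhorovDist (n • μ) (n • ν) ≤ n * levyProkhorovDist μ ν := by
  simpa [levyProkhorovDist, ENNReal.toReal_mul] using ENNReal.toReal_mono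
    (ENNReal.mul_ne_top (ENNReal.natCast_ne_top n) (levyProkhorovEDist_ne_top μ ν))
    (levyProkhorovEDist_nsmul_le n μ ν)

lemma levyProkhorovDist_add_nsmul_le [OpensMeasurableSpace Ω] (μ μ' ν ξ : Measure Ω)
    [IsFiniteMeasure μ] [IsFiniteMeasure μ'] [IsFiniteMeasure ν] [IsFiniteMeasure ξ] (n : ℕ) :
    levyProkhorovDist (μ + μ') (n • ν)
      ≤ levyProkhorovDist μ (n • ξ) + (μ' Set.univ).toReal + n * levyProkhorovDist ν ξ := by
  have h₁ := levyProkhorovDist_triangle (μ + μ') μ (n • ν)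
  have h₂ := levyProkhorovDist_triangle μ (n • ξ) (n • ν)
  have h₃ := levyProkhorovDist_add_left_le μ μ'
  have h₄ := levyProkhorovDist_nsmul_le n ξ ν
  rw [levyProkhorovDist_comm ξ] at h₄
  linarith

end LevyProkhorov

lemma log_sum_exp_sub_le_of_injOn {ι κ : Type*} {s : Finset ι} {t : Finset κ}
    (hs : s.Nonempty) {f : ι → κ} (hf : Set.InjOn f s) (hst : Set.MapsTo f s t)
    {a : ι → ℝ} {b : κ → ℝ} {C : ℝ} (hab : ∀ x ∈ s, a x - C ≤ b (f x)) :
    Real.log (∑ x ∈ s, Real.exp (a x)) - C ≤ Real.log (∑ y ∈ t, Real.exp (b y)) := by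
  have hpos : 0 < ∑ x ∈ s, Real.exp (a x) := sum_pos (fun _ _ => Real.exp_pos _) hs
  calc Real.log (∑ x ∈ s, Real.exp (a x)) - C
      = Real.log (∑ x ∈ s, Real.exp (a x - C)) := by
        simp_rw [Real.exp_sub, ← sum_div, Real.log_div hpos.ne' (Real.exp_ne_zero _),
          Real.log_exp]
    _ ≤ Real.log (∑ y ∈ t, Real.exp (b y)) := by
        refine Real.log_le_log (sum_pos (fun _ _ => Real.exp_pos _) hs) ?_
        calc ∑ x ∈ s, Real.exp (a x - C) ≤ ∑ x ∈ s, Real.exp (b (f x)) :=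
              sum_le_sum fun x hx => Real.exp_le_exp.mpr (hab x hx)
          _ = ∑ y ∈ s.image f, Real.exp (b y) := by rw [sum_image hf]
          _ ≤ ∑ y ∈ t, Real.exp (b y) :=
              sum_le_sum_of_subset_of_nonneg (image_subset_iff.mpr hst)
                fun _ _ _ => (Real.exp_pos _).le

section Partition

variable {D : ℕ}

def logPartition (ω : ((Fin D → ℤ) × Fin D) → I) (ε : ℝ) (L : ℕ) (p q : Fin D → ℤ)
    (μ : Measure I) : ℝ :=
  Real.log (∑ w ∈ pathsFS L p q, Real.exp (-(1/ε) * levyProkhorovDist (pathMeasure ω p w) μ))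

lemma Xn_eq_logPartition (ω : ((Fin D → ℤ) × Fin D) → I) (ε : ℝ) (n : ℕ) (q : Fin D → ℝ)
    (ν : Measure I) : Xn ω ε n q ν = logPartition ω ε (∑ i, (fl n q i).toNat) 0 (fl n q) (n • ν) :=
  rfl

lemma logPartition_sub_le_append (ω : ((Fin D → ℤ) × Fin D) → I) {ε : ℝ} (hε : 0 ≤ ε)
    {L L' : ℕ} {p q r : Fin D → ℤ} (hL : (pathsFS L p q).Nonempty) {w' : Fin L' → Fin D}
    (hw' : w' ∈ pathsFS L' q r) (n : ℕ) (ν ξ : Measure I) [IsFiniteMeasure ν]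
    [IsFiniteMeasure ξ] :
    logPartition ω ε L p q (n • ξ) - 1/ε * (L' + n * levyProkhorovDist ν ξ)
      ≤ logPartition ω ε (L + L') p r (n • ν) := by
  refine log_sum_exp_sub_le_of_injOn hL (f := fun w => Fin.append w w') (fun w₁ _ w₂ _ h => ?_)
    (fun w hw => append_mem_pathsFS hw hw') fun w hw => ?_
  · funext a
    simpa using congrFun h (Fin.castAdd L' a)
  · have h := levyProkhorovDist_add_nsmul_le (pathMeasure ω p w) (pathMeasure ω q w') ν ξ n
    rw [pathMeasure_apply_univ, ENNReal.toReal_natCast, ← pathMeasure_append ω hw] at h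
    have := mul_le_mul_of_nonneg_left h (by positivity : 0 ≤ 1/ε)
    linarith

end Partition

lemma sum_fl_sub_fl_le {D : ℕ} (n : ℕ) (p q : Fin D → ℝ) :
    ∑ i, ((fl n q i : ℝ) - fl n p i) ≤ n * ∑ i, (q i - p i) + D := by
  calc ∑ i, ((fl n q i : ℝ) - fl n p i) ≤ ∑ i, ((n : ℝ) * (q i - p i) + 1) :=
        sum_le_sum fun i _ => by
          have hq := Int.floor_le ((n : ℝ) * q i)
          have hp := Int.sub_one_lt_floor ((n : ℝ) * p i)
          rw [fl, fl, mul_sub]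
          linarith
    _ = n * ∑ i, (q i - p i) + D := by simp [sum_add_distrib, ← mul_sum]

/-- Perturbation estimate:
`X_n^{ε,p,ξ} − (1/ε)(n‖q−p‖₁ + n‖ν−ξ‖_TV + D)`
`≤ X_n^{ε,p,ξ} − (1/ε)(‖⌊nq⌋−⌊np⌋‖₁ + n·ρ(ν,ξ)) ≤ X_n^{ε,q,ν}` for `0 ≤ p ≤ q`
coordinatewise. -/
theorem Xn_perturbation {D : ℕ} (ε : ℝ) (hε : 0 < ε)
    (q : Fin D → ℝ) (ν ξ : Measure I) [IsFiniteMeasure ν] [IsFiniteMeasure ξ]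
    (p : Fin D → ℝ) (hp : ∀ i, 0 ≤ p i) (hpq : ∀ i, p i ≤ q i)
    (ω : ((Fin D → ℤ) × Fin D) → I) (n : ℕ) :
    Xn ω ε n p ξ - (1/ε) * ((n : ℝ) * (∑ i, (q i - p i)) + (n : ℝ) * tvDist ν ξ + D)
        ≤ Xn ω ε n p ξ -
          (1/ε) * ((∑ i, ((fl n q i : ℝ) - (fl n p i : ℝ)))
            + (n : ℝ) * levyProkhorovDist ν ξ) ∧
      Xn ω ε n p ξ -
          (1/ε) * ((∑ i, ((fl n q i : ℝ) - (fl n p i : ℝ)))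
            + (n : ℝ) * levyProkhorovDist ν ξ)
        ≤ Xn ω ε n q ν := by
  have hp_fl : 0 ≤ fl n p := fun i => Int.floor_nonneg.mpr (mul_nonneg n.cast_nonneg (hp i))
  have hpq_fl : fl n p ≤ fl n q := fun i =>
    Int.floor_le_floor (mul_le_mul_of_nonneg_left (hpq i) n.cast_nonneg)
  refine ⟨sub_le_sub_left (mul_le_mul_of_nonneg_left ?_ (by positivity)) _, ?_⟩
  · linarith [sum_fl_sub_fl_le n p q,
      mul_le_mul_of_nonneg_left (levyProkhorovDist_le_tvDist ν ξ) n.cast_nonneg]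
  have hne := pathsFS_nonempty hp_fl (L := ∑ i, (fl n p i).toNat) (by simp)
  obtain ⟨w', hw'⟩ := pathsFS_nonempty hpq_fl rfl
  have hlen : ∑ i, (fl n q i).toNat
      = ∑ i, (fl n p i).toNat + ∑ i, (fl n q i - fl n p i).toNat := by
    rw [← sum_add_distrib]
    exact sum_congr rfl fun i _ => by
      have h₀ : 0 ≤ fl n p i := hp_fl i
      have h₁ : fl n p i ≤ fl n q i := hpq_fl i
      omega
  have hlen_cast : ∑ i, ((fl n q i : ℝ) - fl n p i) = (∑ i, (fl n q i - fl n p i).toNat : ℕ) := by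
    rw [Nat.cast_sum]
    refine sum_congr rfl fun i _ => ?_
    rw [← Int.cast_natCast, Int.toNat_of_nonneg (sub_nonneg.mpr (hpq_fl i)), Int.cast_sub]
  rw [hlen_cast, Xn_eq_logPartition, Xn_eq_logPartition, hlen]
  exact logPartition_sub_le_append ω hε.le hne hw' n ν ξ

end
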